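/- Uniqueness of self-dual elements: if A, B ∈ H both satisfy d(A)=A, d(B)=B, both are supported on {y ≤ x} with coefficient 1 at T̃_x, and all coefficients h_{y}(v) at T̃_y for y < x lie in vℤ[v], then A = B. Equivalently: a self-dual element supported on {y < x} with all coefficients in vℤ[v] is zero. -/

import Mathlib

open LaurentPolynomial

/-- The Bruhat order on a Coxeter group: `y ≤ x` iff `x` can be obtained from `y` by
successively multiplying by reflections, increasing the length at each step. -/
def bruhatLE {B W : Type} [Group W] {M : CoxeterMatrix B} (cs : CoxeterSystem M W)
    (y x : W) : Prop :=
  Relation.ReflTransGen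
    (fun a c => cs.length a < cs.length c ∧ ∃ t : W, cs.IsReflection t ∧ c = t * a) y x

/-- The submodule `vℤ[v] ⊆ ℤ[v,v⁻¹]` of polynomials in `v` with zero constant term:
the `ℤ`-span of `v, v², v³, …`. -/
noncomputable def vZv : Submodule ℤ (LaurentPolynomial ℤ) :=
  Submodule.span ℤ {q : LaurentPolynomial ℤ | ∃ n : ℕ, q = T ((n : ℤ) + 1)}

/-! Since `d(T̃_z) ∈ T̃_z + span{T_u : l(u) < l(z)}`, the coefficient `h` of `T̃_y` in a nonzero
self-dual element, for `y` of maximal length in its support, satisfies `h(v⁻¹) = h(v)`.  Applied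
to `A - A'`, whose coefficients at all `T̃_y` lie in `vℤ[v]`, this forces `h = 0`. -/

theorem coeff_eq_zero_of_mem_vZv {q : ℤ[T;T⁻¹]} (hq : q ∈ vZv) {k : ℤ} (hk : k ≤ 0) :
    q.coeff k = 0 := by
  induction hq using Submodule.span_induction with
  | mem q hq =>
    obtain ⟨m, rfl⟩ := hq
    exact Finsupp.single_eq_of_ne (by omega)
  | zero => rfl
  | add p q _ _ hp hq => exact (congrArg₂ (· + ·) hp hq).trans (add_zero 0)
  | smul r p _ hp => exact (congrArg (r • ·) hp).trans (smul_zero r)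

theorem eq_zero_of_mem_vZv_of_invert_eq {q : ℤ[T;T⁻¹]} (hq : q ∈ vZv) (hinv : invert q = q) :
    q = 0 := by
  ext k
  rcases le_or_gt k 0 with hk | hk
  · exact coeff_eq_zero_of_mem_vZv hq hk
  · rw [← hinv, invert_apply]
    exact coeff_eq_zero_of_mem_vZv hq (by omega)

theorem invert_T_neg_mul_eq_self {R : Type} [CommSemiring R] {c : R[T;T⁻¹]} {n : ℤ}
    (h : c = invert c * T (2 * n)) : invert (T (-n) * c) = T (-n) * c := by
  conv_rhs => rw [h]
  rw [map_mul, invert_T, neg_neg, mul_left_comm, ← T_add, mul_comm]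
  congr 2
  ring

theorem eq_of_mul_eq_one_of_quadratic {H : Type} [Ring H] [Algebra ℤ[T;T⁻¹] H] {s e : H}
    (hquad : s * s = (T (-2) : ℤ[T;T⁻¹]) • (1 : H) + (T (-2) - 1 : ℤ[T;T⁻¹]) • s)
    (hse : s * e = 1) :
    e = (T 2 : ℤ[T;T⁻¹]) • s + (T 2 - 1 : ℤ[T;T⁻¹]) • 1 := by
  have hT : (T 2 : ℤ[T;T⁻¹]) * T (-2) = 1 := by rw [← T_add]; norm_num
  have hinv : ((T 2 : ℤ[T;T⁻¹]) • s + (T 2 - 1 : ℤ[T;T⁻¹]) • 1) * s = 1 := by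
    rw [add_mul, smul_mul_assoc, smul_mul_assoc, one_mul, hquad, smul_add, smul_smul,
      smul_smul, hT, one_smul, mul_sub, hT, mul_one, add_assoc, ← add_smul]
    ring_nf
    simp
  calc e = ((T 2 : ℤ[T;T⁻¹]) • s + (T 2 - 1 : ℤ[T;T⁻¹]) • 1) * s * e := by rw [hinv, one_mul]
    _ = _ := by rw [mul_assoc, hse, mul_one]

section HeckeAlgebra

variable {B W : Type} [Group W] {M : CoxeterMatrix B} (cs : CoxeterSystem M W)
  {H : Type} [Ring H] [Algebra ℤ[T;T⁻¹] H] (b : Module.Basis W ℤ[T;T⁻¹] H)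

structure IsHeckeBasis : Prop where
  one : b 1 = 1
  mul : ∀ x y : W, cs.length (x * y) = cs.length x + cs.length y → b x * b y = b (x * y)
  sq_simple : ∀ i : B, b (cs.simple i) * b (cs.simple i) =
    (T (-2) : ℤ[T;T⁻¹]) • (1 : H) + (T (-2) - 1 : ℤ[T;T⁻¹]) • b (cs.simple i)

noncomputable def lengthFiltration (m : ℕ) : Submodule ℤ[T;T⁻¹] H :=
  Submodule.span ℤ[T;T⁻¹] {h : H | ∃ u : W, cs.length u < m ∧ h = b u}

variable {cs b}

theorem basis_mem_lengthFiltration {u : W} {m : ℕ} (hu : cs.length u < m) :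
    b u ∈ lengthFiltration cs b m :=
  Submodule.subset_span ⟨u, hu, rfl⟩

theorem lengthFiltration_mono {m m' : ℕ} (h : m ≤ m') :
    lengthFiltration cs b m ≤ lengthFiltration cs b m' := by
  apply Submodule.span_mono
  rintro _ ⟨u, hu, rfl⟩
  exact ⟨u, hu.trans_le h, rfl⟩

theorem repr_eq_zero_of_mem_lengthFiltration {m : ℕ} {h : H} (hh : h ∈ lengthFiltration cs b m)
    {y : W} (hy : m ≤ cs.length y) : b.repr h y = 0 := by
  induction hh using Submodule.span_induction with
  | mem h hmem =>
    obtain ⟨u, hu, rfl⟩ := hmem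
    rw [b.repr_self]
    exact Finsupp.single_eq_of_ne (fun h : y = u => by subst h; omega)
  | zero => simp
  | add p q _ _ hp hq => rw [map_add, Finsupp.add_apply, hp, hq, add_zero]
  | smul r p _ hp => rw [map_smul, Finsupp.smul_apply, hp, smul_zero]

theorem basis_eq_simple_mul_of_length_lt
    (hmul : ∀ x y : W, cs.length (x * y) = cs.length x + cs.length y → b x * b y = b (x * y))
    {i : B} {u : W} (h : cs.length (cs.simple i * u) < cs.length u) :
    b u = b (cs.simple i) * b (cs.simple i * u) := by
  have hu : cs.simple i * (cs.simple i * u) = u := cs.simple_mul_simple_cancel_left i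
  have hlen := cs.length_simple_mul u i
  rw [hmul _ _ (by rw [hu, cs.length_simple]; omega), hu]

theorem basis_simple_mul_mem_lengthFiltration
    (hmul : ∀ x y : W, cs.length (x * y) = cs.length x + cs.length y → b x * b y = b (x * y))
    (hquad : ∀ i : B, b (cs.simple i) * b (cs.simple i) =
      (T (-2) : ℤ[T;T⁻¹]) • (1 : H) + (T (-2) - 1 : ℤ[T;T⁻¹]) • b (cs.simple i))
    (i : B) {m : ℕ} {h : H} (hh : h ∈ lengthFiltration cs b m) :
    b (cs.simple i) * h ∈ lengthFiltration cs b (m + 1) := by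
  induction hh using Submodule.span_induction with
  | mem h hmem =>
    obtain ⟨u, hu, rfl⟩ := hmem
    have hlen := cs.length_simple_mul u i
    by_cases hdesc : cs.length (cs.simple i * u) < cs.length u
    · -- `T_s T_u = T_s² T_{su}`, which the quadratic relation writes in terms of `T_{su}` and `T_u`
      rw [basis_eq_simple_mul_of_length_lt hmul hdesc, ← mul_assoc, hquad i, add_mul,
        smul_mul_assoc, smul_mul_assoc, one_mul, ← basis_eq_simple_mul_of_length_lt hmul hdesc]
      exact add_mem (Submodule.smul_mem _ _ (basis_mem_lengthFiltration (by omega)))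
        (Submodule.smul_mem _ _ (basis_mem_lengthFiltration (by omega)))
    · rw [hmul _ _ (by rw [cs.length_simple]; omega)]
      exact basis_mem_lengthFiltration (by omega)
  | zero => rw [mul_zero]; exact zero_mem _
  | add p q _ _ hp hq => rw [mul_add]; exact add_mem hp hq
  | smul r p _ hp => rw [mul_smul_comm]; exact Submodule.smul_mem _ _ hp

theorem dual_basis_sub_mem_lengthFiltration (hb : IsHeckeBasis cs b)
    (d : H →+* H)
    (hd_simple : ∀ i : B, d (b (cs.simple i)) =
      (T 2 : ℤ[T;T⁻¹]) • b (cs.simple i) + (T 2 - 1 : ℤ[T;T⁻¹]) • 1)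
    (z : W) :
    d (b z) - (T (2 * (cs.length z : ℤ)) : ℤ[T;T⁻¹]) • b z ∈
      lengthFiltration cs b (cs.length z) := by
  induction hn : cs.length z generalizing z with
  | zero =>
    rw [cs.length_eq_zero_iff.mp hn, hb.one, map_one]
    simp
  | succ m ih =>
    obtain ⟨i, hi : cs.length (cs.simple i * z) < cs.length z⟩ :=
      cs.exists_leftDescent_of_ne_one (w := z) (by rintro rfl; simp at hn)
    have hm : cs.length (cs.simple i * z) = m := by
      have := cs.length_simple_mul z i; omega
    set z' := cs.simple i * z
    set E := d (b z') - (T (2 * (m : ℤ)) : ℤ[T;T⁻¹]) • b z'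
    have hE : E ∈ lengthFiltration cs b m := ih z' hm
    have hT : (T (2 * ((m + 1 : ℕ) : ℤ)) : ℤ[T;T⁻¹]) = T 2 * T (2 * (m : ℤ)) := by
      rw [← T_add]; congr 1; push_cast; ring
    have hexpand : d (b z) - (T (2 * ((m + 1 : ℕ) : ℤ)) : ℤ[T;T⁻¹]) • b z =
        (T 2 : ℤ[T;T⁻¹]) • (b (cs.simple i) * E) +
          ((T 2 - 1) * T (2 * (m : ℤ)) : ℤ[T;T⁻¹]) • b z' + (T 2 - 1 : ℤ[T;T⁻¹]) • E := by
      have hdz' : d (b z') = (T (2 * (m : ℤ)) : ℤ[T;T⁻¹]) • b z' + E := (add_sub_cancel _ _).symm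
      rw [basis_eq_simple_mul_of_length_lt hb.mul hi, map_mul, hd_simple i, hdz', hT, add_mul,
        smul_mul_assoc, smul_mul_assoc, one_mul, mul_add, mul_smul_comm]
      module
    rw [hexpand]
    refine add_mem (add_mem ?_ ?_) ?_
    · exact Submodule.smul_mem _ _
        (basis_simple_mul_mem_lengthFiltration hb.mul hb.sq_simple i hE)
    · exact Submodule.smul_mem _ _ (basis_mem_lengthFiltration (by omega))
    · exact Submodule.smul_mem _ _ (lengthFiltration_mono (by omega) hE)

theorem repr_dual_basis_of_length_le (hb : IsHeckeBasis cs b)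
    (d : H →+* H)
    (hd_simple : ∀ i : B, d (b (cs.simple i)) =
      (T 2 : ℤ[T;T⁻¹]) • b (cs.simple i) + (T 2 - 1 : ℤ[T;T⁻¹]) • 1)
    {z y : W} (hzy : cs.length z ≤ cs.length y) :
    b.repr (d (b z)) y = Finsupp.single z (T (2 * (cs.length z : ℤ)) : ℤ[T;T⁻¹]) y := by
  have h := repr_eq_zero_of_mem_lengthFiltration
    (dual_basis_sub_mem_lengthFiltration hb d hd_simple z) hzy
  rwa [map_sub, map_smul, Finsupp.sub_apply, Finsupp.smul_apply, b.repr_self, sub_eq_zero,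
    ← Finsupp.smul_apply, Finsupp.smul_single, smul_eq_mul, mul_one] at h

/-- At a basis vector `T_y` of maximal length in the support of a self-dual element, only
`d(T_y)` contributes to the coefficient of `T_y` in `d C`. -/
theorem repr_eq_invert_mul_of_dual_eq_self (hb : IsHeckeBasis cs b)
    (d : H →+* H)
    (hd_smul : ∀ (r : ℤ[T;T⁻¹]) (x : H), d (r • x) = invert r • d x)
    (hd_simple : ∀ i : B, d (b (cs.simple i)) =
      (T 2 : ℤ[T;T⁻¹]) • b (cs.simple i) + (T 2 - 1 : ℤ[T;T⁻¹]) • 1)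
    {C : H} (hC : d C = C) {y : W} (hmax : ∀ z, cs.length y < cs.length z → b.repr C z = 0) :
    b.repr C y = invert (b.repr C y) * T (2 * (cs.length y : ℤ)) := by
  set c := b.repr C
  have hdC : d C = ∑ z ∈ c.support, invert (c z) • d (b z) := by
    conv_lhs => rw [← b.linearCombination_repr C, Finsupp.linearCombination_apply, Finsupp.sum,
      map_sum]
    exact Finset.sum_congr rfl fun z _ => hd_smul _ _
  have hterm : ∀ z ∈ c.support, b.repr (invert (c z) • d (b z)) y =
      Finsupp.single z (invert (c z) * T (2 * (cs.length z : ℤ))) y := by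
    intro z hz
    have hzy : cs.length z ≤ cs.length y :=
      not_lt.mp fun hlt => Finsupp.mem_support_iff.mp hz (hmax z hlt)
    rw [map_smul, Finsupp.smul_apply, repr_dual_basis_of_length_le hb d hd_simple hzy,
      ← Finsupp.smul_apply, Finsupp.smul_single, smul_eq_mul]
  calc c y = b.repr (d C) y := by rw [hC]
    _ = ∑ z ∈ c.support, Finsupp.single z (invert (c z) * T (2 * (cs.length z : ℤ))) y := by
      rw [hdC, map_sum, Finset.sum_apply', Finset.sum_congr rfl hterm]
    _ = Finsupp.single y (invert (c y) * T (2 * (cs.length y : ℤ))) y := by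
      refine Finset.sum_eq_single y (fun z _ hzy => Finsupp.single_eq_of_ne hzy.symm) ?_
      intro hy
      rw [Finsupp.notMem_support_iff.mp hy, map_zero, zero_mul, Finsupp.single_zero,
        Finsupp.zero_apply]
    _ = _ := Finsupp.single_eq_same

theorem eq_zero_of_dual_eq_self_of_mem_vZv (hb : IsHeckeBasis cs b)
    (d : H →+* H)
    (hd_smul : ∀ (r : ℤ[T;T⁻¹]) (x : H), d (r • x) = invert r • d x)
    (hd_simple : ∀ i : B, d (b (cs.simple i)) =
      (T 2 : ℤ[T;T⁻¹]) • b (cs.simple i) + (T 2 - 1 : ℤ[T;T⁻¹]) • 1)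
    {C : H} (hC : d C = C) (hlow : ∀ y : W, T (-(cs.length y : ℤ)) * b.repr C y ∈ vZv) :
    C = 0 := by
  by_contra hne
  obtain ⟨y, hy, hmax⟩ := (b.repr C).support.exists_max_image cs.length
    (Finsupp.support_nonempty_iff.mpr ((LinearEquiv.map_ne_zero_iff b.repr).mpr hne))
  have hcy := repr_eq_invert_mul_of_dual_eq_self hb d hd_smul hd_simple hC (y := y)
    fun z hz => by_contra fun h => hz.not_ge (hmax z (Finsupp.mem_support_iff.mpr h))
  have hzero := eq_zero_of_mem_vZv_of_invert_eq (hlow y) (invert_T_neg_mul_eq_self hcy)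
  rw [mul_eq_zero] at hzero
  exact Finsupp.mem_support_iff.mp hy (hzero.resolve_left (isUnit_T _).ne_zero)

end HeckeAlgebra

theorem stmt10_general {B W : Type} [Group W] (M : CoxeterMatrix B) (cs : CoxeterSystem M W)
    {H : Type} [Ring H] [Algebra (LaurentPolynomial ℤ) H]
    (b : Module.Basis W (LaurentPolynomial ℤ) H)
    (hone : b 1 = 1)
    (hmul : ∀ x y : W, cs.length (x * y) = cs.length x + cs.length y →
      b x * b y = b (x * y))
    (hquad : ∀ i : B, b (cs.simple i) * b (cs.simple i) =
      (T (-2) : LaurentPolynomial ℤ) • (1 : H) +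
        ((T (-2) - 1 : LaurentPolynomial ℤ)) • b (cs.simple i))
    (d : H →+* H)
    (hd_smul : ∀ (r : LaurentPolynomial ℤ) (x : H),
      d (r • x) = (invert r : LaurentPolynomial ℤ) • d x)
    (hd_basis : ∀ w : W, d (b w) * b w⁻¹ = 1 ∧ b w⁻¹ * d (b w) = 1)
    (x : W) (A A' : H)
    (hA : d A = A) (hA' : d A' = A')
    (hsuppA : ∀ y : W, ¬ bruhatLE cs y x → b.repr A y = 0)
    (hsuppA' : ∀ y : W, ¬ bruhatLE cs y x → b.repr A' y = 0)
    (htopA : b.repr A x = T (cs.length x : ℤ))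
    (htopA' : b.repr A' x = T (cs.length x : ℤ))
    (hlowA : ∀ y : W, bruhatLE cs y x → y ≠ x →
      T (-(cs.length y : ℤ)) * b.repr A y ∈ vZv)
    (hlowA' : ∀ y : W, bruhatLE cs y x → y ≠ x →
      T (-(cs.length y : ℤ)) * b.repr A' y ∈ vZv) :
    A = A' := by
  have hd_simple (i : B) : d (b (cs.simple i)) =
      (T 2 : ℤ[T;T⁻¹]) • b (cs.simple i) + (T 2 - 1 : ℤ[T;T⁻¹]) • 1 := by
    refine eq_of_mul_eq_one_of_quadratic (hquad i) ?_
    simpa only [cs.inv_simple] using (hd_basis (cs.simple i)).2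
  refine sub_eq_zero.mp <| eq_zero_of_dual_eq_self_of_mem_vZv ⟨hone, hmul, hquad⟩ d hd_smul
    hd_simple (by rw [map_sub, hA, hA']) fun y => ?_
  rw [map_sub, Finsupp.sub_apply, mul_sub]
  by_cases hyx : bruhatLE cs y x
  · by_cases hxy : y = x
    · rw [hxy, htopA, htopA', sub_self]
      exact zero_mem _
    · exact sub_mem (hlowA y hyx hxy) (hlowA' y hyx hxy)
  · rw [hsuppA y hyx, hsuppA' y hyx, sub_self]
    exact zero_mem _

/-- **uniqueness of self-dual elements.** Let `H` be the Hecke algebra of a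
Coxeter system over `ℤ[v,v⁻¹]` (basis `{T_w = b w}`, `T_e = 1`, standard relations) with
Kazhdan–Lusztig involution `d`.  If `A, B ∈ H` are both self-dual (`d A = A`, `d B = B`),
both supported on `{y : y ≤ x}` with coefficient `1` at `T̃_x = v^{l(x)} T_x` (i.e. the
coefficient of `T_x` is `v^{l(x)}`), and for `y < x` all coefficients
`h_y = v^{-l(y)}·(repr · ) y` at `T̃_y` lie in `vℤ[v]`, then `A = B`. -/
theorem stmt10 {B W : Type} [Group W] (M : CoxeterMatrix B) (cs : CoxeterSystem M W)
    {H : Type} [Ring H] [Algebra (LaurentPolynomial ℤ) H]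
    (b : Module.Basis W (LaurentPolynomial ℤ) H)
    (hone : b 1 = 1)
    (hmul : ∀ x y : W, cs.length (x * y) = cs.length x + cs.length y →
      b x * b y = b (x * y))
    (hquad : ∀ i : B, b (cs.simple i) * b (cs.simple i) =
      (T (-2) : LaurentPolynomial ℤ) • (1 : H) +
        ((T (-2) - 1 : LaurentPolynomial ℤ)) • b (cs.simple i))
    (d : H →+* H)
    (hd_smul : ∀ (r : LaurentPolynomial ℤ) (x : H),
      d (r • x) = (invert r : LaurentPolynomial ℤ) • d x)
    (hd_basis : ∀ w : W, d (b w) * b w⁻¹ = 1 ∧ b w⁻¹ * d (b w) = 1)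
    (hd_invol : ∀ x : H, d (d x) = x)
    (x : W) (A A' : H)
    (hA : d A = A) (hA' : d A' = A')
    (hsuppA : ∀ y : W, ¬ bruhatLE cs y x → b.repr A y = 0)
    (hsuppA' : ∀ y : W, ¬ bruhatLE cs y x → b.repr A' y = 0)
    (htopA : b.repr A x = T (cs.length x : ℤ))
    (htopA' : b.repr A' x = T (cs.length x : ℤ))
    (hlowA : ∀ y : W, bruhatLE cs y x → y ≠ x →
      T (-(cs.length y : ℤ)) * b.repr A y ∈ vZv)
    (hlowA' : ∀ y : W, bruhatLE cs y x → y ≠ x →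
      T (-(cs.length y : ℤ)) * b.repr A' y ∈ vZv) :
    A = A' :=
  stmt10_general M cs b hone hmul hquad d hd_smul hd_basis x A A' hA hA' hsuppA hsuppA' htopA htopA'
    hlowA hlowA'
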